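/- Disentanglement theorem (Theorem 4): let p be a sequence of tokens over a context-free grammar G and local lexing ℓℓ = (Lex, Sel) with input D ∈ Σ*. Then p ∈ 𝕻 if and only if both (a) for all i with 0 ≤ i < |p|, the token p_i belongs to 𝒵_{|p̄₀…p̄_{i-1}|}^∞ (the union over all stages u of the selected token sets at position |p̄₀…p̄_{i-1}|), and (b) [p] ∈ ℒ_prefix. -/

import Mathlib

namespace LL
section Defs

/-- A context-free grammar `(𝔑, 𝔗, ℜ, 𝔖)`: nonterminals are the type `N`,
terminals the type `T` (automatically disjoint), `rules ⊆ 𝔑 × (𝔑 ∪ 𝔗)*`,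
and `start ∈ 𝔑`. -/
structure CFG (N T : Type*) where
  rules : Set (N × List (N ⊕ T))
  start : N

variable {N T C : Type*}

/-- One derivation step `α ⇒ β`. -/
def CFG.Step (G : CFG N T) (α β : List (N ⊕ T)) : Prop :=
  ∃ a A b γ, α = a ++ Sum.inl A :: b ∧ β = a ++ γ ++ b ∧ (A, γ) ∈ G.rules

/-- `⇒*`, the reflexive transitive closure of `⇒`. -/
def CFG.Derives (G : CFG N T) : List (N ⊕ T) → List (N ⊕ T) → Prop :=
  Relation.ReflTransGen G.Step

/-- `ℒ = { w ∈ 𝔗* | 𝔖 ⇒* w }`. -/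
def CFG.lang (G : CFG N T) : Set (List T) :=
  {w | G.Derives [Sum.inl G.start] (w.map Sum.inr)}

/-- `ℒ_prefix = { w ∈ 𝔗* | ∃ α. 𝔖 ⇒* w α }`. -/
def CFG.langPrefix (G : CFG N T) : Set (List T) :=
  {w | ∃ α, G.Derives [Sum.inl G.start] (w.map Sum.inr ++ α)}

/-- A token is a pair `(t, c) ∈ 𝔗 × Σ*`. -/
abbrev Token (T C : Type*) := T × List C

/-- `p̄`, the characters of a token sequence. -/
def chars (p : List (Token T C)) : List C := (p.map Prod.snd).flatten

/-- `[p]`, the terminals of a token sequence. -/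
def terms (p : List (Token T C)) : List T := p.map Prod.fst

/-- `limit f X = ⋃ n, fⁿ(X)`. -/
def limit {α : Type*} (f : Set α → Set α) (X : Set α) : Set α := ⋃ n, f^[n] X

/-- A local lexing `(Lex, Sel)` with respect to terminals `T` and characters `C`. -/
structure LocalLexing (T C : Type*) where
  Lex : T → List C → ℕ → Set (Token T C)
  Sel : Set (Token T C) → Set (Token T C) → Set (Token T C)
  lex_sound : ∀ t D k, ∀ x ∈ Lex t D k,
      x.1 = t ∧ k + x.2.length ≤ D.length ∧ x.2 <+: D.drop k
  sel_sound : ∀ A B : Set (Token T C), A ⊆ B → A ⊆ Sel A B ∧ Sel A B ⊆ B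

variable (G : CFG N T) (ll : LocalLexing T C) (D : List C)

/-- `𝒳ₖ = { x | x ∈ Lex([x])(D, k) }`. -/
def Xtok (k : ℕ) : Set (Token T C) := {x | x ∈ ll.Lex x.1 D k}

/-- `𝒲` of a path set `P` at position `k`:
`{ x ∈ 𝒳ₖ | ∃ p ∈ P. |p̄| = k ∧ [p x] ∈ ℒ_prefix }`. -/
def Wtok (P : Set (List (Token T C))) (k : ℕ) : Set (Token T C) :=
  {x | x ∈ Xtok ll D k ∧ ∃ p ∈ P, (chars p).length = k ∧ terms (p ++ [x]) ∈ G.langPrefix}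

/-- `Appendₖ T P = P ∪ { p t | p ∈ P ∧ |p̄| = k ∧ t ∈ T ∧ [p t] ∈ ℒ_prefix }`. -/
def Append (k : ℕ) (Ts : Set (Token T C)) (P : Set (List (Token T C))) :
    Set (List (Token T C)) :=
  P ∪ {q | ∃ p ∈ P, ∃ t ∈ Ts, q = p ++ [t] ∧ (chars p).length = k ∧ terms q ∈ G.langPrefix}

/-- The pair `(𝒫ₖᵘ, 𝒵ₖᵘ)`, starting from the path set `P₀` at position `k`:
`𝒵ₖ⁰ = ∅`, `𝒵ₖᵘ⁺¹ = Sel(𝒵ₖᵘ, 𝒲ₖᵘ⁺¹)` and `𝒫ₖᵘ⁺¹ = limit (Appendₖ 𝒵ₖᵘ⁺¹) 𝒫ₖᵘ`. -/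
def Pstage (k : ℕ) (P₀ : Set (List (Token T C))) :
    ℕ → Set (List (Token T C)) × Set (Token T C)
  | 0 => (P₀, ∅)
  | u + 1 =>
      let PZ := Pstage k P₀ u
      let Z := ll.Sel PZ.2 (Wtok G ll D PZ.1 k)
      (limit (Append G k Z) PZ.1, Z)

/-- `𝒫ₖ⁰`:  `𝒫₀⁰ = {ε}` and `𝒫ₖ₊₁⁰ = 𝒫ₖ^∞`. -/
def Pinit : ℕ → Set (List (Token T C))
  | 0 => {[]}
  | k + 1 => ⋃ u, (Pstage G ll D k (Pinit k) u).1

/-- The path sets `𝒫ₖᵘ`. -/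
def Pset (k u : ℕ) : Set (List (Token T C)) := (Pstage G ll D k (Pinit G ll D k) u).1

/-- The selected token sets `𝒵ₖᵘ`. -/
def Zset (k u : ℕ) : Set (Token T C) := (Pstage G ll D k (Pinit G ll D k) u).2

/-- The admissible token sets `𝒲ₖᵘ`. -/
def Wset (k u : ℕ) : Set (Token T C) := Wtok G ll D (Pset G ll D k u) k

/-- `𝒵ₖ^∞ = ⋃ u, 𝒵ₖᵘ`. -/
def Zinf (k : ℕ) : Set (Token T C) := ⋃ u, Zset G ll D k u

/-- `𝕻 = 𝒫_{|D|}^∞`. -/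
def PP : Set (List (Token T C)) := ⋃ u, Pset G ll D D.length u

/-- `ℓℓ(D) = { p ∈ 𝕻 | |p̄| = |D| ∧ [p] ∈ ℒ }`. -/
def sem : Set (List (Token T C)) :=
  {p | p ∈ PP G ll D ∧ (chars p).length = D.length ∧ terms p ∈ G.lang}

/-- An Earley item `(lhs → pre • post, origin, bin)`. -/
structure EItem (N T : Type*) where
  lhs : N
  pre : List (N ⊕ T)
  post : List (N ⊕ T)
  origin : ℕ
  bin : ℕ

/-- `Init = { (𝔖 → • α, 0, 0) | (𝔖 → α) ∈ ℜ }`. -/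
def EInit : Set (EItem N T) :=
  {x | ∃ α, (G.start, α) ∈ G.rules ∧ x = ⟨G.start, [], α, 0, 0⟩}

/-- The `Predict` operator. -/
def Predict (k : ℕ) (I : Set (EItem N T)) : Set (EItem N T) :=
  I ∪ {x | ∃ M γ, (M, γ) ∈ G.rules ∧
        (∃ N' α β i, (⟨N', α, Sum.inl M :: β, i, k⟩ : EItem N T) ∈ I) ∧
        x = ⟨M, [], γ, k, k⟩}

/-- The `Complete` operator. -/
def Complete (k : ℕ) (I : Set (EItem N T)) : Set (EItem N T) :=
  I ∪ {x | ∃ N' α M β i j γ,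
        (⟨N', α, Sum.inl M :: β, i, j⟩ : EItem N T) ∈ I ∧
        (⟨M, γ, [], j, k⟩ : EItem N T) ∈ I ∧
        x = ⟨N', α ++ [Sum.inl M], β, i, k⟩}

/-- The token-based `Scan` operator. -/
def Scan (Ts : Set (Token T C)) (k : ℕ) (I : Set (EItem N T)) : Set (EItem N T) :=
  I ∪ {x | ∃ N' α X c β i, (X, c) ∈ Ts ∧
        (⟨N', α, Sum.inr X :: β, i, k⟩ : EItem N T) ∈ I ∧
        x = ⟨N', α ++ [Sum.inr X], β, i, k + c.length⟩}

/-- `Tokens T k I = Sel(T, { x | ∃ X N α β i. (N → α • X β, i, k) ∈ I ∧ x ∈ Lex(X)(D, k) })`. -/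
def Tokens (Ts : Set (Token T C)) (k : ℕ) (I : Set (EItem N T)) : Set (Token T C) :=
  ll.Sel Ts {x | ∃ X N' α β i, (⟨N', α, Sum.inr X :: β, i, k⟩ : EItem N T) ∈ I ∧
        x ∈ ll.Lex X D k}

/-- `πₖ T I = limit (Scan T k ∘ Complete k ∘ Predict k) I`. -/
def pik (Ts : Set (Token T C)) (k : ℕ) (I : Set (EItem N T)) : Set (EItem N T) :=
  limit (fun J => Scan Ts k (Complete k (Predict G k J))) I

/-- The pair `(𝔍ₖᵘ, 𝒯ₖᵘ)`, starting from the item set `J₀` at position `k`: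
`𝒯ₖ⁰ = ∅`, `𝒯ₖᵘ⁺¹ = Tokens 𝒯ₖᵘ k 𝔍ₖᵘ` and `𝔍ₖᵘ⁺¹ = πₖ 𝒯ₖᵘ⁺¹ 𝔍ₖᵘ`. -/
def Jstage (k : ℕ) (J₀ : Set (EItem N T)) : ℕ → Set (EItem N T) × Set (Token T C)
  | 0 => (J₀, ∅)
  | u + 1 =>
      let JT := Jstage k J₀ u
      let T' := Tokens ll D JT.2 k JT.1
      (pik G T' k JT.1, T')

/-- `𝔍ₖ⁰`:  `𝔍₀⁰ = π₀ ∅ Init` and `𝔍ₖ₊₁⁰ = πₖ₊₁ ∅ 𝓘ₖ`. -/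
def Jinit : ℕ → Set (EItem N T)
  | 0 => pik G (∅ : Set (Token T C)) 0 (EInit G)
  | k + 1 => pik G (∅ : Set (Token T C)) (k + 1) (⋃ u, (Jstage G ll D k (Jinit k) u).1)

/-- The item sets `𝔍ₖᵘ`. -/
def Jset (k u : ℕ) : Set (EItem N T) := (Jstage G ll D k (Jinit G ll D k) u).1

/-- The token sets `𝒯ₖᵘ`. -/
def Tset (k u : ℕ) : Set (Token T C) := (Jstage G ll D k (Jinit G ll D k) u).2

/-- `𝓘ₖ = ⋃ u, 𝔍ₖᵘ`. -/
def Ibin (k : ℕ) : Set (EItem N T) := ⋃ u, Jset G ll D k u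

/-- `𝕴 = 𝓘_{|D|}`. -/
def Items : Set (EItem N T) := Ibin G ll D D.length

/-- An item `(N → α • β, i, j)` is `p`-valid. -/
def pValid (p : List (Token T C)) (x : EItem N T) : Prop :=
  (x.lhs, x.pre ++ x.post) ∈ G.rules ∧
  ∃ u ≤ p.length, ∃ γ,
    (chars p).length = x.bin ∧
    (chars (p.take u)).length = x.origin ∧
    G.Derives [Sum.inl G.start] ((terms (p.take u)).map Sum.inr ++ Sum.inl x.lhs :: γ) ∧
    G.Derives x.pre ((terms (p.drop u)).map Sum.inr)

/-- `⟨P⟩ = { x | ∃ p ∈ P. x is p-valid }`. -/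
def Gen (P : Set (List (Token T C))) : Set (EItem N T) :=
  {x | ∃ p ∈ P, pValid G p x}

/-! ### Auxiliary lemmas for disentanglement -/

lemma subset_limit' {α : Type*} (f : Set α → Set α) (X : Set α) : X ⊆ limit f X :=
  fun x hx => Set.mem_iUnion.2 ⟨0, hx⟩

lemma Pset_zero (k : ℕ) : Pset G ll D k 0 = Pinit G ll D k := rfl

lemma Pset_succ (k u : ℕ) :
    Pset G ll D k (u + 1) =
      limit (Append G k (Zset G ll D k (u + 1))) (Pset G ll D k u) := rfl

lemma Zset_succ (k u : ℕ) :
    Zset G ll D k (u + 1) = ll.Sel (Zset G ll D k u) (Wset G ll D k u) := rfl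

lemma Pset_mono_u {k u u' : ℕ} (h : u ≤ u') : Pset G ll D k u ⊆ Pset G ll D k u' := by
  induction u' with
  | zero => simpa [Nat.le_zero.1 h] using subset_rfl
  | succ n ih =>
      rcases Nat.lt_or_ge u (n + 1) with h' | h'
      · exact (ih (Nat.lt_succ_iff.1 h')).trans
          ((Pset_succ G ll D k n) ▸ subset_limit' _ _)
      · have : u = n + 1 := le_antisymm h h'
        subst this; exact subset_rfl

lemma Wtok_mono {P P' : Set (List (Token T C))} (h : P ⊆ P') (k : ℕ) :
    Wtok G ll D P k ⊆ Wtok G ll D P' k := by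
  rintro x ⟨hx, p, hp, hlen, hpre⟩
  exact ⟨hx, p, h hp, hlen, hpre⟩

lemma Zset_sub_Wset (k : ℕ) : ∀ u, Zset G ll D k u ⊆ Wset G ll D k u := by
  intro u
  induction u with
  | zero => intro x hx; exact absurd hx (by simp [Zset, Pstage])
  | succ n ih =>
      have h1 : Zset G ll D k (n + 1) ⊆ Wset G ll D k n := by
        rw [Zset_succ]
        exact (ll.sel_sound _ _ ih).2
      exact h1.trans (Wtok_mono G ll D (Pset_mono_u G ll D (Nat.le_succ n)) k)

lemma Zset_mono_u {k u u' : ℕ} (h : u ≤ u') : Zset G ll D k u ⊆ Zset G ll D k u' := by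
  induction u' with
  | zero => simpa [Nat.le_zero.1 h] using subset_rfl
  | succ n ih =>
      rcases Nat.lt_or_ge u (n + 1) with h' | h'
      · refine (ih (Nat.lt_succ_iff.1 h')).trans ?_
        rw [Zset_succ]
        exact (ll.sel_sound _ _ (Zset_sub_Wset G ll D k n)).1
      · have : u = n + 1 := le_antisymm h h'
        subst this; exact subset_rfl

lemma Zinf_sub_Xtok (k : ℕ) : Zinf G ll D k ⊆ Xtok ll D k := by
  intro x hx
  rcases Set.mem_iUnion.1 hx with ⟨u, hu⟩
  cases u with
  | zero => exact absurd hu (by simp [Zset, Pstage])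
  | succ n => exact (Zset_sub_Wset G ll D k (n + 1) hu).1

lemma Pset_sub_Pinit_succ (k u : ℕ) : Pset G ll D k u ⊆ Pinit G ll D (k + 1) :=
  Set.subset_iUnion (fun u => (Pstage G ll D k (Pinit G ll D k) u).1) u

lemma Pinit_mono {k k' : ℕ} (h : k ≤ k') : Pinit G ll D k ⊆ Pinit G ll D k' := by
  induction k' with
  | zero => simpa [Nat.le_zero.1 h] using subset_rfl
  | succ n ih =>
      rcases Nat.lt_or_ge k (n + 1) with h' | h'
      · exact (ih (Nat.lt_succ_iff.1 h')).trans (Pset_sub_Pinit_succ G ll D n 0)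
      · have : k = n + 1 := le_antisymm h h'
        subst this; exact subset_rfl

lemma Pset_sub {k k' u : ℕ} (h : k ≤ k') :
    Pset G ll D k u ⊆ ⋃ u', Pset G ll D k' u' := by
  rcases Nat.lt_or_ge k k' with h' | h'
  · refine ((Pset_sub_Pinit_succ G ll D k u).trans (Pinit_mono G ll D h')).trans ?_
    exact Set.subset_iUnion (fun u' => Pset G ll D k' u') 0
  · have : k = k' := le_antisymm h h'
    subst this
    exact Set.subset_iUnion (fun u' => Pset G ll D k u') u

/-- The "good" property in the disentanglement theorem. -/
def Good (p : List (Token T C)) : Prop :=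
  (∀ i (_ : i < p.length), p[i] ∈ Zinf G ll D (chars (p.take i)).length) ∧
    terms p ∈ G.langPrefix

lemma good_nil : Good G ll D ([] : List (Token T C)) := by
  refine ⟨fun i hi => absurd hi (by simp), ⟨[Sum.inl G.start], ?_⟩⟩
  simp [terms]
  exact Relation.ReflTransGen.refl

lemma chars_append (p q : List (Token T C)) : chars (p ++ q) = chars p ++ chars q := by
  simp [chars]

lemma terms_append (p q : List (Token T C)) : terms (p ++ q) = terms p ++ terms q := by
  simp [terms]

lemma good_append {p : List (Token T C)} {t : Token T C} {k : ℕ}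
    (hp : Good G ll D p) (ht : t ∈ Zinf G ll D k) (hk : (chars p).length = k)
    (hl : terms (p ++ [t]) ∈ G.langPrefix) : Good G ll D (p ++ [t]) := by
  refine ⟨fun i hi => ?_, hl⟩
  simp only [List.length_append, List.length_singleton] at hi
  rcases Nat.lt_or_ge i p.length with h | h
  · rw [List.getElem_append_left h, List.take_append_of_le_length h.le]
    exact hp.1 i h
  · have hip : i = p.length := by omega
    subst hip
    rw [List.getElem_append_right (le_refl p.length),
      List.take_append_of_le_length (le_refl p.length)]
    simpa [hk] using ht

lemma good_limit {k : ℕ} {Z : Set (Token T C)} {P : Set (List (Token T C))}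
    (hZ : Z ⊆ Zinf G ll D k) (hP : ∀ p ∈ P, Good G ll D p) :
    ∀ p ∈ limit (Append G k Z) P, Good G ll D p := by
  intro p hp
  rcases Set.mem_iUnion.1 hp with ⟨n, hn⟩
  clear hp
  induction n generalizing p with
  | zero => exact hP p hn
  | succ m ih =>
      rw [Function.iterate_succ_apply'] at hn
      rcases hn with hn | ⟨q, hq, t, htZ, rfl, hlen, hterms⟩
      · exact ih p hn
      · exact good_append G ll D (ih q hq) (hZ htZ) hlen hterms

lemma good_Pset_of_init {k : ℕ} (h : ∀ p ∈ Pinit G ll D k, Good G ll D p) :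
    ∀ u, ∀ p ∈ Pset G ll D k u, Good G ll D p := by
  intro u
  induction u with
  | zero => exact h
  | succ n ih =>
      rw [Pset_succ]
      exact good_limit G ll D
        (Set.subset_iUnion (fun u => Zset G ll D k u) (n + 1)) ih

lemma good_Pinit : ∀ k, ∀ p ∈ Pinit G ll D k, Good G ll D p := by
  intro k
  induction k with
  | zero =>
      intro p hp
      have : p = [] := hp
      subst this; exact good_nil G ll D
  | succ n ih =>
      intro p hp
      rcases Set.mem_iUnion.1 hp with ⟨u, hu⟩
      exact good_Pset_of_init G ll D ih u p hu

lemma good_Pset {k u : ℕ} : ∀ p ∈ Pset G ll D k u, Good G ll D p :=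
  good_Pset_of_init G ll D (good_Pinit G ll D k) u

lemma good_of_concat {q : List (Token T C)} {x : Token T C}
    (h : Good G ll D (q ++ [x])) : Good G ll D q := by
  constructor
  · intro i hi
    have := h.1 i (by simp; omega)
    rwa [List.getElem_append_left hi, List.take_append_of_le_length hi.le] at this
  · rcases h.2 with ⟨α, hα⟩
    rw [terms_append] at hα
    refine ⟨Sum.inr x.1 :: α, ?_⟩
    simpa [terms] using hα

lemma concat_last_mem_Zinf {q : List (Token T C)} {x : Token T C}
    (h : Good G ll D (q ++ [x])) : x ∈ Zinf G ll D (chars q).length := by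
  have := h.1 q.length (by simp)
  rw [List.getElem_append_right (le_refl q.length),
    List.take_append_of_le_length (le_refl q.length), List.take_length] at this
  simpa using this

lemma mem_Pset_of_good : ∀ p : List (Token T C), Good G ll D p →
    ∃ u, p ∈ Pset G ll D (chars p).length u := by
  intro p
  induction p using List.reverseRecOn with
  | nil =>
      intro _
      exact ⟨0, by simp [Pset, Pstage, Pinit, chars]⟩
  | append_singleton q x ih =>
      intro h
      obtain ⟨u, hu⟩ := ih (good_of_concat G ll D h)
      set k := (chars q).length with hk
      obtain ⟨v, hv⟩ := Set.mem_iUnion.1 (concat_last_mem_Zinf G ll D h)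
      set m := max u v with hm
      have hq : q ∈ Pset G ll D k m := Pset_mono_u G ll D (le_max_left u v) hu
      have hx : x ∈ Zset G ll D k (m + 1) :=
        Zset_mono_u G ll D ((le_max_right u v).trans (Nat.le_succ m)) hv
      have hmem : q ++ [x] ∈ Pset G ll D k (m + 1) := by
        rw [Pset_succ]
        have h1 : q ++ [x] ∈ Append G k (Zset G ll D k (m + 1)) (Pset G ll D k m) :=
          Set.mem_union_right _ ⟨q, hq, x, hx, rfl, hk.symm, h.2⟩
        exact Set.mem_iUnion.2 ⟨1, by simpa using h1⟩
      have hle : k ≤ (chars (q ++ [x])).length := by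
        rw [chars_append]; simp; omega
      have := Pset_sub G ll D hle hmem
      exact Set.mem_iUnion.1 this

lemma chars_length_le {p : List (Token T C)} (h : Good G ll D p) :
    (chars p).length ≤ D.length := by
  induction p using List.reverseRecOn with
  | nil => simp [chars]
  | append_singleton q x _ =>
      have hx := Zinf_sub_Xtok G ll D _ (concat_last_mem_Zinf G ll D h)
      have := (ll.lex_sound x.1 D (chars q).length x hx).2.1
      rw [chars_append]
      simpa [chars] using this

/-- Disentanglement: `p ∈ 𝕻` iff (a) every token `pᵢ` of `p` belongs to
`𝒵_{|p̄₀…p̄ᵢ₋₁|}^∞` and (b) `[p] ∈ ℒ_prefix`. -/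
theorem disentanglement {N T C : Type*} (G : CFG N T) (ll : LocalLexing T C) (D : List C)
    (p : List (Token T C)) :
    p ∈ PP G ll D ↔
      ((∀ i (hi : i < p.length), p[i] ∈ Zinf G ll D (chars (p.take i)).length) ∧
        terms p ∈ G.langPrefix) := by
  constructor
  · intro hp
    rcases Set.mem_iUnion.1 hp with ⟨u, hu⟩
    exact good_Pset G ll D p hu
  · intro h
    have hG : Good G ll D p := h
    obtain ⟨u, hu⟩ := mem_Pset_of_good G ll D p hG
    exact Pset_sub G ll D (chars_length_le G ll D hG) hu

end Defs
end LL
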